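/- Let S be an additively divisible semiring (commutative) possessing a multiplicative identity 1. Then either S is additively idempotent, or S contains a copy of the parasemifield ℚ⁺ of positive rationals sharing the unit: there exists an injective map f from the positive rational numbers into S satisfying f(p+q) = f(p) + f(q), f(p·q) = f(p)·f(q) for all positive rationals p, q, and f(1) = 1. -/

import Mathlib

/-! Divisibility makes every `n · 1` (`n ≥ 1`) a unit of `S`, so `a / b ↦ (a · 1) (b · 1)⁻¹`
is a well-defined map `ℚ⁺ → S` respecting `+` and `*`. If it is not injective then
`a · 1 = b · 1` for some `a < b`; then `n ↦ n · 1` is periodic from `a` on, so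
`2N · 1 = N · 1` for a suitable `N`, and cancelling the unit `N · 1` gives `1 + 1 = 1`. -/

/-- `nmul n a` is the `n`-fold sum `a + ⋯ + a` (for `n ≥ 1`; `nmul 0 a = a` is junk). -/
def nmul {S : Type*} [Add S] (n : ℕ) (a : S) : S :=
  Nat.rec a (fun _ b => b + a) (n - 1)

instance rightDistribClass_of_leftDistribClass {S : Type*} [CommMagma S] [Add S]
    [LeftDistribClass S] : RightDistribClass S where
  right_distrib a b c := by simp only [mul_comm _ c, mul_add]

section nmul

variable {S : Type*} [AddCommSemigroup S]

theorem nmul_one (a : S) : nmul 1 a = a := rfl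

theorem nmul_succ {n : ℕ} (hn : 1 ≤ n) (a : S) : nmul (n + 1) a = nmul n a + a := by
  obtain ⟨n, rfl⟩ := Nat.exists_eq_add_of_le' hn
  rfl

theorem nmul_add {m n : ℕ} (hm : 1 ≤ m) (hn : 1 ≤ n) (a : S) :
    nmul (m + n) a = nmul m a + nmul n a := by
  induction n, hn using Nat.le_induction with
  | base => exact nmul_succ hm a
  | succ n hn ih => rw [← add_assoc, nmul_succ (by omega), ih, nmul_succ hn, add_assoc]

theorem nmul_mul {m n : ℕ} (hm : 1 ≤ m) (hn : 1 ≤ n) (a : S) :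
    nmul (m * n) a = nmul m (nmul n a) := by
  induction m, hm using Nat.le_induction with
  | base => rw [one_mul, nmul_one]
  | succ m hm ih => rw [add_one_mul, nmul_add (Nat.mul_pos hm hn) hn, ih, nmul_succ hm]

theorem nmul_add_mul_eq_of_add_eq {m k : ℕ} (hm : 1 ≤ m) {a : S}
    (h : nmul (m + k) a = nmul m a) {n : ℕ} (hn : m ≤ n) (j : ℕ) :
    nmul (n + j * k) a = nmul n a := by
  have hperiod : ∀ l, m ≤ l → nmul (l + k) a = nmul l a := by
    intro l hl
    induction l, hl using Nat.le_induction with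
    | base => exact h
    | succ l hl ih => rw [add_right_comm, nmul_succ (by omega), ih, nmul_succ (by omega)]
  induction j with
  | zero => rw [zero_mul, add_zero]
  | succ j ih => rw [add_one_mul, ← add_assoc, hperiod _ (by omega), ih]

end nmul

section nmulOne

variable {S : Type*} [AddCommSemigroup S] [CommMonoid S] [LeftDistribClass S]

theorem nmul_eq_nmul_one_mul {n : ℕ} (hn : 1 ≤ n) (a : S) : nmul n a = nmul n 1 * a := by
  induction n, hn using Nat.le_induction with
  | base => rw [nmul_one, nmul_one, one_mul]
  | succ n hn ih => rw [nmul_succ hn, nmul_succ hn, ih, add_mul, one_mul]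

theorem nmul_one_mul_nmul_one {m n : ℕ} (hm : 1 ≤ m) (hn : 1 ≤ n) :
    nmul m (1 : S) * nmul n 1 = nmul (m * n) 1 := by
  rw [nmul_mul hm hn, ← nmul_eq_nmul_one_mul hm]

theorem isUnit_nmul_one {n : ℕ} (hn : 1 ≤ n) (h : ∃ b : S, nmul n b = 1) :
    IsUnit (nmul n (1 : S)) := by
  obtain ⟨b, hb⟩ := h
  exact IsUnit.of_mul_eq_one b (by rw [← nmul_eq_nmul_one_mul hn, hb])

theorem add_self_of_nmul_one_eq (hunit : ∀ n, 1 ≤ n → IsUnit (nmul n (1 : S)))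
    {m n : ℕ} (hm : 1 ≤ m) (hmn : m < n) (h : nmul m (1 : S) = nmul n 1) (a : S) :
    a + a = a := by
  obtain ⟨k, hk, rfl⟩ : ∃ k, 1 ≤ k ∧ n = m + k := ⟨n - m, by omega, by omega⟩
  have hN : 1 ≤ m * k := Nat.mul_pos hm hk
  -- `n ↦ n · 1` has period `k` from `m` on, and `m * k ≥ m` is a multiple of `k`
  have hdouble : nmul 2 (1 : S) * nmul (m * k) 1 = nmul (m * k) 1 := by
    rw [nmul_one_mul_nmul_one (by norm_num) hN, two_mul]
    exact nmul_add_mul_eq_of_add_eq hm h.symm (Nat.le_mul_of_pos_right m hk) m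
  have htwo : nmul 2 (1 : S) = 1 := (hunit _ hN).mul_eq_right.1 hdouble
  calc a + a = a * nmul 2 1 := by rw [show nmul 2 (1 : S) = 1 + 1 from rfl, mul_add, mul_one]
    _ = a := by rw [htwo, mul_one]

theorem eq_of_nmul_one_eq (hunit : ∀ n, 1 ≤ n → IsUnit (nmul n (1 : S)))
    (hidem : ¬ ∀ a : S, a + a = a) {m n : ℕ} (hm : 1 ≤ m) (hn : 1 ≤ n)
    (h : nmul m (1 : S) = nmul n 1) : m = n := by
  by_contra hne
  rcases Nat.lt_or_gt_of_ne hne with hlt | hlt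
  exacts [hidem (add_self_of_nmul_one_eq hunit hm hlt h),
    hidem (add_self_of_nmul_one_eq hunit hn hlt h.symm)]

end nmulOne

theorem NNRat.exists_eq_natCast_div_natCast {q : ℚ≥0} (hq : q ≠ 0) :
    ∃ a b : ℕ, 1 ≤ a ∧ 1 ≤ b ∧ q = a / b :=
  ⟨q.num, q.den, NNRat.num_pos.2 (pos_iff_ne_zero.2 hq), q.den_pos, q.num_div_den.symm⟩

section ratEmbed

variable {S : Type*} [AddCommSemigroup S] [CommMonoid S]

-- Intended for `U n` the unit `n · 1` (hypothesis `hU` below); the value at `q = 0` is junk.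
def ratEmbed (U : ℕ → Sˣ) (q : ℚ≥0) : S := nmul q.num (1 : S) /ₚ U q.den

variable {U : ℕ → Sˣ}

theorem ratEmbed_div [LeftDistribClass S] (hU : ∀ n, 1 ≤ n → (U n : S) = nmul n 1) {m n : ℕ}
    (hm : 1 ≤ m) (hn : 1 ≤ n) : ratEmbed U (m / n) = nmul m 1 /ₚ U n := by
  set q : ℚ≥0 := m / n with hq
  have hnum : 1 ≤ q.num := NNRat.num_pos.2 (by positivity)
  have hcross : q.num * n = m * q.den := by
    have := (div_eq_div_iff (by positivity) (by positivity)).1 (q.num_div_den.trans hq)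
    exact_mod_cast this
  rw [ratEmbed, divp_eq_divp_iff, hU _ hn, hU _ q.den_pos, nmul_one_mul_nmul_one hnum hn,
    nmul_one_mul_nmul_one hm q.den_pos, hcross]

theorem ratEmbed_one (hU : ∀ n, 1 ≤ n → (U n : S) = nmul n 1) : ratEmbed U 1 = 1 := by
  rw [ratEmbed, NNRat.num_one, NNRat.den_one, Units.val_eq_one.1 (hU 1 le_rfl), divp_one,
    nmul_one]

theorem ratEmbed_add [LeftDistribClass S] (hU : ∀ n, 1 ≤ n → (U n : S) = nmul n 1)
    {p q : ℚ≥0} (hp : p ≠ 0) (hq : q ≠ 0) :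
    ratEmbed U (p + q) = ratEmbed U p + ratEmbed U q := by
  obtain ⟨a, b, ha, hb, rfl⟩ := NNRat.exists_eq_natCast_div_natCast hp
  obtain ⟨c, d, hc, hd, rfl⟩ := NNRat.exists_eq_natCast_div_natCast hq
  have had : 1 ≤ a * d := Nat.mul_pos ha hd
  have hbc : 1 ≤ b * c := Nat.mul_pos hb hc
  have hbd : 1 ≤ b * d := Nat.mul_pos hb hd
  rw [div_add_div _ _ (by positivity) (by positivity),
    ← mul_div_mul_right (a : ℚ≥0) b (by positivity : (d : ℚ≥0) ≠ 0),
    ← mul_div_mul_left (c : ℚ≥0) d (by positivity : (b : ℚ≥0) ≠ 0)]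
  simp only [← Nat.cast_mul, ← Nat.cast_add]
  rw [ratEmbed_div hU (le_add_right had) hbd, ratEmbed_div hU had hbd, ratEmbed_div hU hbc hbd,
    nmul_add had hbc]
  simp only [divp, add_mul]

theorem ratEmbed_mul [LeftDistribClass S] (hU : ∀ n, 1 ≤ n → (U n : S) = nmul n 1)
    {p q : ℚ≥0} (hp : p ≠ 0) (hq : q ≠ 0) :
    ratEmbed U (p * q) = ratEmbed U p * ratEmbed U q := by
  obtain ⟨a, b, ha, hb, rfl⟩ := NNRat.exists_eq_natCast_div_natCast hp
  obtain ⟨c, d, hc, hd, rfl⟩ := NNRat.exists_eq_natCast_div_natCast hq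
  have hUmul : U (b * d) = U b * U d := by
    ext
    rw [Units.val_mul, hU _ hb, hU _ hd, hU _ (Nat.mul_pos hb hd), nmul_one_mul_nmul_one hb hd]
  rw [div_mul_div_comm, ← Nat.cast_mul, ← Nat.cast_mul,
    ratEmbed_div hU (Nat.mul_pos ha hc) (Nat.mul_pos hb hd), ratEmbed_div hU ha hb,
    ratEmbed_div hU hc hd, divp_mul_divp, nmul_one_mul_nmul_one ha hc, hUmul]

theorem eq_of_ratEmbed_eq [LeftDistribClass S]
    (hU : ∀ n, 1 ≤ n → (U n : S) = nmul n 1) (hidem : ¬ ∀ a : S, a + a = a)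
    {p q : ℚ≥0} (hp : p ≠ 0) (hq : q ≠ 0) (h : ratEmbed U p = ratEmbed U q) : p = q := by
  obtain ⟨a, b, ha, hb, rfl⟩ := NNRat.exists_eq_natCast_div_natCast hp
  obtain ⟨c, d, hc, hd, rfl⟩ := NNRat.exists_eq_natCast_div_natCast hq
  have hunit : ∀ n, 1 ≤ n → IsUnit (nmul n (1 : S)) := fun n hn => hU n hn ▸ (U n).isUnit
  rw [ratEmbed_div hU ha hb, ratEmbed_div hU hc hd, divp_eq_divp_iff, hU _ hb, hU _ hd,
    nmul_one_mul_nmul_one ha hd, nmul_one_mul_nmul_one hc hb] at h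
  rw [div_eq_div_iff (by positivity) (by positivity)]
  exact_mod_cast eq_of_nmul_one_eq hunit hidem (Nat.mul_pos ha hd) (Nat.mul_pos hc hb) h

end ratEmbed

theorem stmt_12_general {S : Type*} [AddCommSemigroup S] [CommMonoid S]
    (hdl : ∀ a b c : S, a * (b + c) = a * b + a * c)
    (hdiv : ∀ a : S, ∀ n : ℕ, 1 ≤ n → ∃ b : S, nmul n b = a) :
    (∀ a : S, a + a = a) ∨
    (∃ f : {q : ℚ // 0 < q} → S, Function.Injective f ∧
      (∀ p q : {q : ℚ // 0 < q}, f ⟨p.1 + q.1, add_pos p.2 q.2⟩ = f p + f q) ∧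
      (∀ p q : {q : ℚ // 0 < q}, f ⟨p.1 * q.1, mul_pos p.2 q.2⟩ = f p * f q) ∧
      f ⟨1, one_pos⟩ = 1) := by
  have : LeftDistribClass S := ⟨hdl⟩
  by_cases hidem : ∀ a : S, a + a = a
  · exact Or.inl hidem
  have hunit (n : ℕ) (hn : 1 ≤ n) : IsUnit (nmul n (1 : S)) := isUnit_nmul_one hn (hdiv 1 n hn)
  obtain ⟨U, hU⟩ : ∃ U : ℕ → Sˣ, ∀ n, 1 ≤ n → (U n : S) = nmul n 1 :=
    ⟨fun n => if hn : 1 ≤ n then (hunit n hn).unit else 1, fun n hn => by simp [hn]⟩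
  have hne (q : {q : ℚ // 0 < q}) : (⟨q.1, q.2.le⟩ : ℚ≥0) ≠ 0 :=
    fun h => q.2.ne' (congrArg Subtype.val h)
  refine Or.inr ⟨fun q => ratEmbed U ⟨q.1, q.2.le⟩, fun p q h => ?_,
    fun p q => ratEmbed_add hU (hne p) (hne q), fun p q => ratEmbed_mul hU (hne p) (hne q),
    ratEmbed_one hU⟩
  exact Subtype.ext (Subtype.mk.inj (eq_of_ratEmbed_eq hU hidem (hne p) (hne q) h))

theorem stmt_12 {S : Type*} [AddCommSemigroup S] [CommMonoid S]
    (hdl : ∀ a b c : S, a * (b + c) = a * b + a * c)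
    (hdr : ∀ a b c : S, (a + b) * c = a * c + b * c)
    (hdiv : ∀ a : S, ∀ n : ℕ, 1 ≤ n → ∃ b : S, nmul n b = a) :
    (∀ a : S, a + a = a) ∨
    (∃ f : {q : ℚ // 0 < q} → S, Function.Injective f ∧
      (∀ p q : {q : ℚ // 0 < q}, f ⟨p.1 + q.1, add_pos p.2 q.2⟩ = f p + f q) ∧
      (∀ p q : {q : ℚ // 0 < q}, f ⟨p.1 * q.1, mul_pos p.2 q.2⟩ = f p * f q) ∧
      f ⟨1, one_pos⟩ = 1) :=
  stmt_12_general hdl hdiv
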